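/- Let γ ∈ (0,1) and consider the symmetric case k = 1. If ρ ∈ (0, γ/(1−γ)) then T_is^{k=1} < T_ps^{k=1} < T_fs^{k=1}, and if ρ ∈ (γ/(1−γ), ∞) then T_fs^{k=1} < T_ps^{k=1} < T_is^{k=1}, where T_is^{k=1}, T_ps^{k=1}, T_fs^{k=1} are the explicit rational functions of (ρ,γ) given in the context. -/
import Mathlib


/-- Throughput of the independent system in the symmetric case `k = 1`. -/
noncomputable def TisK1 (ρ : ℝ) : ℝ := 2*ρ/(ρ+1)

/-- Throughput of the full flexibility system in the symmetric case `k = 1`. -/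
noncomputable def TfsK1 (ρ γ : ℝ) : ℝ :=
  2*γ*ρ*(2*γ^2*ρ + γ^2 + 2*γ*ρ^2 + 4*γ*ρ + γ + 2*ρ^2) /
    (γ^3*(ρ+1)^2 + γ^2*(ρ^3 + 5*ρ^2 + 4*ρ + 1) + 2*γ*ρ^2*(ρ+1) + ρ^3)

/-- Throughput of the partial flexibility system in the symmetric case `k = 1`. -/
noncomputable def TpsK1 (ρ γ : ℝ) : ℝ :=
  2*ρ*(3*γ^2*ρ + 2*γ^2 + 3*γ*ρ^2 + 7*γ*ρ + 2*γ + ρ^2) /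
    (2*γ^2*(ρ+1)^2 + γ*(2*ρ^3 + 9*ρ^2 + 8*ρ + 2) + 2*ρ^2*(ρ+1))

private lemma is_ps (ρ γ : ℝ) (hρ : 0 < ρ) (hγ0 : 0 < γ) (hγ1 : γ < 1)
    (hs : 0 < γ - ρ*(1-γ)) : TisK1 ρ < TpsK1 ρ γ := by
  unfold TisK1 TpsK1
  have hd1 : (0:ℝ) < ρ + 1 := by linarith
  have hd2 : (0:ℝ) < 2*γ^2*(ρ+1)^2 + γ*(2*ρ^3 + 9*ρ^2 + 8*ρ + 2) + 2*ρ^2*(ρ+1) := by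
    positivity
  rw [div_lt_div_iff₀ hd1 hd2]
  nlinarith [mul_pos (mul_pos (mul_pos (by positivity : (0:ℝ) < 2*ρ^2)
    (by linarith : (0:ℝ) < 1 + γ + ρ)) hs) (by norm_num : (0:ℝ) < 1)]

private lemma ps_fs (ρ γ : ℝ) (hρ : 0 < ρ) (hγ0 : 0 < γ) (hγ1 : γ < 1)
    (hs : 0 < γ - ρ*(1-γ)) : TpsK1 ρ γ < TfsK1 ρ γ := by
  unfold TpsK1 TfsK1
  have hd2 : (0:ℝ) < 2*γ^2*(ρ+1)^2 + γ*(2*ρ^3 + 9*ρ^2 + 8*ρ + 2) + 2*ρ^2*(ρ+1) := by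
    positivity
  have hd3 : (0:ℝ) < γ^3*(ρ+1)^2 + γ^2*(ρ^3 + 5*ρ^2 + 4*ρ + 1) + 2*γ*ρ^2*(ρ+1) + ρ^3 := by
    positivity
  rw [div_lt_div_iff₀ hd2 hd3]
  have hq : (0:ℝ) < 2*ρ^2*(γ^2*(1+γ)^2 + ρ*γ*(2+6*γ+5*γ^2+γ^3)
      + 2*ρ^2*γ*(3+3*γ+γ^2) + ρ^3*(1+γ)^2) := by positivity
  nlinarith [mul_pos hq hs]

private lemma ps_is (ρ γ : ℝ) (hρ : 0 < ρ) (hγ0 : 0 < γ) (hγ1 : γ < 1)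
    (hs : γ - ρ*(1-γ) < 0) : TpsK1 ρ γ < TisK1 ρ := by
  unfold TisK1 TpsK1
  have hd1 : (0:ℝ) < ρ + 1 := by linarith
  have hd2 : (0:ℝ) < 2*γ^2*(ρ+1)^2 + γ*(2*ρ^3 + 9*ρ^2 + 8*ρ + 2) + 2*ρ^2*(ρ+1) := by
    positivity
  rw [div_lt_div_iff₀ hd2 hd1]
  nlinarith [mul_pos (mul_pos (by positivity : (0:ℝ) < 2*ρ^2)
    (by linarith : (0:ℝ) < 1 + γ + ρ)) (by linarith : (0:ℝ) < ρ*(1-γ) - γ)]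

private lemma fs_ps (ρ γ : ℝ) (hρ : 0 < ρ) (hγ0 : 0 < γ) (hγ1 : γ < 1)
    (hs : γ - ρ*(1-γ) < 0) : TfsK1 ρ γ < TpsK1 ρ γ := by
  unfold TpsK1 TfsK1
  have hd2 : (0:ℝ) < 2*γ^2*(ρ+1)^2 + γ*(2*ρ^3 + 9*ρ^2 + 8*ρ + 2) + 2*ρ^2*(ρ+1) := by
    positivity
  have hd3 : (0:ℝ) < γ^3*(ρ+1)^2 + γ^2*(ρ^3 + 5*ρ^2 + 4*ρ + 1) + 2*γ*ρ^2*(ρ+1) + ρ^3 := by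
    positivity
  rw [div_lt_div_iff₀ hd3 hd2]
  have hq : (0:ℝ) < 2*ρ^2*(γ^2*(1+γ)^2 + ρ*γ*(2+6*γ+5*γ^2+γ^3)
      + 2*ρ^2*γ*(3+3*γ+γ^2) + ρ^3*(1+γ)^2) := by positivity
  nlinarith [mul_pos hq (by linarith : (0:ℝ) < ρ*(1-γ) - γ)]

/-- in the symmetric case `k = 1`, the ordering of the throughputs
switches at `ρ = γ/(1-γ)`. -/
theorem stmt_7 (γ : ℝ) (hγ : γ ∈ Set.Ioo (0:ℝ) 1) :
    (∀ ρ : ℝ, ρ ∈ Set.Ioo 0 (γ/(1-γ)) →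
      TisK1 ρ < TpsK1 ρ γ ∧ TpsK1 ρ γ < TfsK1 ρ γ) ∧
    (∀ ρ : ℝ, ρ ∈ Set.Ioi (γ/(1-γ)) →
      TfsK1 ρ γ < TpsK1 ρ γ ∧ TpsK1 ρ γ < TisK1 ρ) := by
  obtain ⟨hγ0, hγ1⟩ := hγ
  have h1γ : (0:ℝ) < 1 - γ := by linarith
  constructor
  · rintro ρ ⟨hρ0, hρ2⟩
    have hs : 0 < γ - ρ*(1-γ) := by
      rw [lt_div_iff₀ h1γ] at hρ2; linarith
    exact ⟨is_ps ρ γ hρ0 hγ0 hγ1 hs, ps_fs ρ γ hρ0 hγ0 hγ1 hs⟩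
  · intro ρ hρ
    have hρ2 : γ/(1-γ) < ρ := hρ
    have hρ0 : 0 < ρ := lt_trans (by positivity) hρ2
    have hs : γ - ρ*(1-γ) < 0 := by
      rw [div_lt_iff₀ h1γ] at hρ2; linarith
    exact ⟨fs_ps ρ γ hρ0 hγ0 hγ1 hs, ps_is ρ γ hρ0 hγ0 hγ1 hs⟩
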